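/- Let ρ: ℝ → ℝ be convex and twice differentiable with ψ = ρ'. For fixed x ∈ ℝ, the map c ↦ ρ(prox(cρ)(x)) is nonincreasing on (0, ∞); in fact its derivative equals −ψ²(prox(cρ)(x)) / (1 + c·ψ'(prox(cρ)(x))) ≤ 0. -/

import Mathlib

/-!
Convexity makes `ψ` monotone, so `ψ' ≥ 0` and `1 + c ψ' > 0`. Subtracting the prox equations at
`c` and `y` and using monotonicity of `ψ` gives `|P y - P c| ≤ |ψ (P c)| |y - c|`, so `P` is
continuous, and locally constant where `ψ (P c) = 0`. Elsewhere `t ↦ (x - t) / ψ t` is a local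
left inverse of `P`, whence `P' = -ψ(P) / (1 + c ψ'(P))`; the chain rule finishes.
-/

open Set Filter Topology

theorem ConvexOn.monotone_of_hasDerivAt {ρ ψ : ℝ → ℝ} (hconv : ConvexOn ℝ univ ρ)
    (hρ : ∀ t, HasDerivAt ρ (ψ t) t) : Monotone ψ := by
  have hderiv : deriv ρ = ψ := funext fun t => (hρ t).deriv
  simpa [hderiv] using hconv.monotoneOn_deriv fun t _ => (hρ t).differentiableAt

theorem Monotone.hasDerivAt_nonneg {ψ : ℝ → ℝ} {d t : ℝ} (hψ : Monotone ψ)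
    (h : HasDerivAt ψ d t) : 0 ≤ d :=
  h.deriv ▸ hψ.deriv_nonneg

section Prox

variable {ψ ψd P : ℝ → ℝ} {x c : ℝ}

theorem one_add_mul_pos_of_monotone (hψ : Monotone ψ) (hψd : ∀ t, HasDerivAt ψ (ψd t) t)
    (hc : 0 < c) (t : ℝ) : 0 < 1 + c * ψd t := by
  have := hψ.hasDerivAt_nonneg (hψd t)
  positivity

theorem abs_sub_le_of_add_mul_eq (hψ : Monotone ψ) {a b y : ℝ} (hy : 0 ≤ y)
    (ha : a + y * ψ a = x) (hb : b + c * ψ b = x) : |a - b| ≤ |ψ b| * |y - c| := by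
  have hmono : 0 ≤ (ψ a - ψ b) * (a - b) := by
    rcases le_total a b with h | h
    · exact mul_nonneg_of_nonpos_of_nonpos (sub_nonpos.2 (hψ h)) (sub_nonpos.2 h)
    · exact mul_nonneg (sub_nonneg.2 (hψ h)) (sub_nonneg.2 h)
  have hsq : |a - b| * |a - b| ≤ (|ψ b| * |y - c|) * |a - b| :=
    calc |a - b| * |a - b|
        = (c - y) * ψ b * (a - b) - y * ((ψ a - ψ b) * (a - b)) := by
          rw [abs_mul_abs_self]; linear_combination (a - b) * (ha - hb)
      _ ≤ (c - y) * ψ b * (a - b) := sub_le_self _ (mul_nonneg hy hmono)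
      _ ≤ |(c - y) * ψ b * (a - b)| := le_abs_self _
      _ = (|ψ b| * |y - c|) * |a - b| := by
          rw [abs_mul, abs_mul, abs_sub_comm]; ring
  rcases (abs_nonneg (a - b)).eq_or_lt with h | h
  · rw [← h]; positivity
  · exact le_of_mul_le_mul_right hsq h

variable (hP : ∀ c : ℝ, 0 < c → P c + c * ψ (P c) = x)
include hP

theorem continuousAt_of_add_mul_eq (hψ : Monotone ψ) (hc : 0 < c) : ContinuousAt P c := by
  refine continuousAt_of_locally_lipschitz hc |ψ (P c)| fun y hy => ?_
  rw [Real.dist_eq] at hy ⊢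
  rw [Real.dist_eq]
  have hy₀ : 0 < y := by linarith [(abs_lt.1 hy).1]
  exact abs_sub_le_of_add_mul_eq hψ hy₀.le (hP y hy₀) (hP c hc)

theorem hasDerivAt_of_add_mul_eq (hψ : Monotone ψ) (hψd : ∀ t, HasDerivAt ψ (ψd t) t)
    (hc : 0 < c) : HasDerivAt P (-ψ (P c) / (1 + c * ψd (P c))) c := by
  have hden := one_add_mul_pos_of_monotone hψ hψd hc (P c)
  by_cases hb : ψ (P c) = 0
  · have hconst : P =ᶠ[𝓝 c] fun _ => P c := by
      filter_upwards [Ioi_mem_nhds hc] with y hy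
      have := abs_sub_le_of_add_mul_eq hψ hy.le (hP y hy) (hP c hc)
      rwa [hb, abs_zero, zero_mul, abs_nonpos_iff, sub_eq_zero] at this
    rw [hb, neg_zero, zero_div]
    exact (hasDerivAt_const c (P c)).congr_of_eventuallyEq hconst
  · have hg : HasDerivAt (fun t => (x - t) / ψ t) (-(1 + c * ψd (P c)) / ψ (P c)) (P c) := by
      refine (((hasDerivAt_id _).const_sub x).div (hψd (P c)) hb).congr_deriv ?_
      rw [id, show x - P c = c * ψ (P c) by linarith [hP c hc]]
      field_simp
      ring
    have hg' : -(1 + c * ψd (P c)) / ψ (P c) ≠ 0 := div_ne_zero (by linarith) hb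
    have hinv : ∀ᶠ y in 𝓝 c, (x - P y) / ψ (P y) = y := by
      filter_upwards [Ioi_mem_nhds hc] with y hy
      have hψy : ψ (P y) ≠ 0 := fun h0 => hb <| by
        have := abs_sub_le_of_add_mul_eq hψ hc.le (hP c hc) (hP y hy)
        rw [h0, abs_zero, zero_mul, abs_nonpos_iff, sub_eq_zero] at this
        rwa [this]
      rw [show x - P y = y * ψ (P y) by linarith [hP y hy], mul_div_cancel_right₀ _ hψy]
    refine (hg.of_local_left_inverse (continuousAt_of_add_mul_eq hP hψ hc) hg' hinv).congr_deriv ?_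
    rw [inv_div, div_neg, neg_div]

end Prox

/-- `c ↦ ρ(prox(cρ)(x))` is nonincreasing on `(0,∞)`, with derivative
`-ψ²(prox(cρ)(x)) / (1 + c ψ'(prox(cρ)(x))) ≤ 0`. -/
theorem stmt2 (ρ ψ ψd : ℝ → ℝ)
    (hconv : ConvexOn ℝ Set.univ ρ)
    (hρ : ∀ t, HasDerivAt ρ (ψ t) t)
    (hψ : ∀ t, HasDerivAt ψ (ψd t) t)
    (x : ℝ) (P : ℝ → ℝ)
    (hP : ∀ c : ℝ, 0 < c → P c + c * ψ (P c) = x) :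
    AntitoneOn (fun c => ρ (P c)) (Set.Ioi (0 : ℝ)) ∧
    ∀ c : ℝ, 0 < c →
      HasDerivAt (fun c => ρ (P c)) (-(ψ (P c)) ^ 2 / (1 + c * ψd (P c))) c ∧
      -(ψ (P c)) ^ 2 / (1 + c * ψd (P c)) ≤ 0 := by
  have hmono := hconv.monotone_of_hasDerivAt hρ
  have hderiv : ∀ c : ℝ, 0 < c →
      HasDerivAt (fun c => ρ (P c)) (-(ψ (P c)) ^ 2 / (1 + c * ψd (P c))) c := fun c hc => by
    refine ((hρ (P c)).comp c (hasDerivAt_of_add_mul_eq hP hmono hψ hc)).congr_deriv ?_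
    ring
  have hnonpos : ∀ c : ℝ, 0 < c → -(ψ (P c)) ^ 2 / (1 + c * ψd (P c)) ≤ 0 := fun c hc =>
    div_nonpos_of_nonpos_of_nonneg (neg_nonpos.2 (sq_nonneg _))
      (one_add_mul_pos_of_monotone hmono hψ hc _).le
  refine ⟨antitoneOn_of_hasDerivWithinAt_nonpos (convex_Ioi 0)
    (f' := fun c => -(ψ (P c)) ^ 2 / (1 + c * ψd (P c))) ?_ ?_ ?_,
    fun c hc => ⟨hderiv c hc, hnonpos c hc⟩⟩
  · exact fun c hc => (hderiv c hc).continuousAt.continuousWithinAt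
  · rw [interior_Ioi]
    exact fun c hc => (hderiv c hc).hasDerivWithinAt
  · rw [interior_Ioi]
    exact hnonpos
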